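/- Let r_1,…,r_k ≥ 0, and let J ⊂ ℂ[h_1,…,h_k] be the ideal generated by the polynomials J_{R_a}(h_1,…,h_k) − r_a for a = 1,…,k, where s_{R_a} = J_{R_a}(h_1,…,h_k) expresses the rectangular Schur function via Jacobi–Trudi. Then the affine algebraic variety 𝓡 ⊂ ℂ^k defined by J is finite. -/

import Mathlib

/-!
Give `X i = h_{i+1}` the weight `i + 1`. Then every `J_{R_a}` is weighted homogeneous of positive
degree, and the `J_{R_a}` have no common zero besides `0`: if `x_j` is the last nonzero coordinate
of `x`, then for a suitable `a` the Jacobi–Trudi matrix of `J_{R_a}` at `x` is triangular with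
diagonal `x_j`.
By the Nullstellensatz a power of every variable lies in the ideal of the `J_{R_a}`, and
homogeneity lets one rewrite every monomial modulo `(J_{R_a} - r_a)` in terms of monomials of
bounded exponents. So the quotient is finite-dimensional, and its finitely many characters
are the points of the variety.
-/

open MvPolynomial

/-- `h_n` over `ℂ`, with `ℂ[h_1,…,h_k]` modelled as `MvPolynomial (Fin k) ℂ`
and `X i = h_{i+1}`: `h_0 = 1`, `h_n = X (n-1)` for `1 ≤ n ≤ k`, `0` otherwise. -/
noncomputable def hsymC (k : ℕ) (n : ℤ) : MvPolynomial (Fin k) ℂ :=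
  if hn : 0 < n ∧ n ≤ (k : ℤ) then X ⟨(n - 1).toNat, by omega⟩
  else if n = 0 then 1 else 0

/-- The rectangle Schur polynomial `J_{R_{a+1}}(h_1,…,h_k)`, `R_b = ((k-b+1)^b)`,
given by the Jacobi-Trudi determinant, as a polynomial in `h_1,…,h_k` over `ℂ`. -/
noncomputable def sRC (k : ℕ) (a : Fin k) : MvPolynomial (Fin k) ℂ :=
  (Matrix.of fun i j : Fin (a.val + 1) =>
    hsymC k ((((k : ℤ) - a.val) - i.val) + j.val)).det

theorem Finsupp.weight_nonneg {σ M : Type*} [AddCommMonoid M] [PartialOrder M]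
    [IsOrderedAddMonoid M] {w : σ → M} (hw : ∀ i, 0 ≤ w i) (s : σ →₀ ℕ) :
    0 ≤ Finsupp.weight w s :=
  Finset.sum_nonneg fun i _ => nsmul_nonneg (hw i) (s i)

namespace MvPolynomial

section WeightedHomogeneous

variable {R σ M : Type*} [CommSemiring R] [AddCommGroup M] {w : σ → M}

theorem weightedHomogeneousComponent_mul_of_isWeightedHomogeneous {f : MvPolynomial σ R} {d : M}
    (hf : IsWeightedHomogeneous w f d) (g : MvPolynomial σ R) (m : M) :
    weightedHomogeneousComponent w m (g * f) = weightedHomogeneousComponent w (m - d) g * f := by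
  classical
  ext c
  rw [coeff_weightedHomogeneousComponent, coeff_mul, coeff_mul, ← boole_mul, Finset.mul_sum]
  refine Finset.sum_congr rfl fun ⟨u, v⟩ huv => ?_
  rw [coeff_weightedHomogeneousComponent]
  by_cases hv : coeff v f = 0
  · simp [hv]
  have hweight : Finsupp.weight w c = Finsupp.weight w u + d := by
    rw [← Finset.HasAntidiagonal.mem_antidiagonal.mp huv, map_add, hf hv]
  simp only [hweight, ← eq_sub_iff_add_eq, ite_mul, one_mul, zero_mul]

theorem exists_isWeightedHomogeneous_of_mem_span {ι : Type*} [Fintype ι]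
    {f : ι → MvPolynomial σ R} {d : ι → M} (hf : ∀ a, IsWeightedHomogeneous w (f a) (d a))
    {p : MvPolynomial σ R} {m : M} (hp : IsWeightedHomogeneous w p m)
    (hmem : p ∈ Ideal.span (Set.range f)) :
    ∃ g : ι → MvPolynomial σ R,
      (∀ a, IsWeightedHomogeneous w (g a) (m - d a)) ∧ p = ∑ a, g a * f a := by
  obtain ⟨g, hg⟩ := (Submodule.mem_span_range_iff_exists_fun _).mp hmem
  refine ⟨fun a => weightedHomogeneousComponent w (m - d a) (g a),
    fun a => weightedHomogeneousComponent_isWeightedHomogeneous _ _, ?_⟩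
  calc p = weightedHomogeneousComponent w m p := hp.weightedHomogeneousComponent_same.symm
    _ = ∑ a, weightedHomogeneousComponent w (m - d a) (g a) * f a := by
      simp only [← hg, smul_eq_mul, map_sum,
        weightedHomogeneousComponent_mul_of_isWeightedHomogeneous (hf _)]

theorem IsWeightedHomogeneous.mem_of_monomial_mem {W : Submodule R (MvPolynomial σ R)}
    {p : MvPolynomial σ R} {m : M} (hp : IsWeightedHomogeneous w p m)
    (hW : ∀ s, Finsupp.weight w s = m → monomial s 1 ∈ W) : p ∈ W := by
  rw [p.as_sum]
  refine Submodule.sum_mem _ fun s hs => ?_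
  rw [← mul_one (coeff s p), ← smul_eq_mul, ← smul_monomial]
  exact W.smul_mem _ (hW s (hp (mem_support_iff.mp hs)))

end WeightedHomogeneous

section FiniteQuotient

variable {R σ ι : Type*} [CommRing R] [Fintype ι] {w : σ → ℤ} {f : ι → MvPolynomial σ R}
  {d : ι → ℤ}

theorem monomial_mem_span_monomial_Iic_sup_span_sub_C (hw : ∀ i, 0 ≤ w i)
    (hf : ∀ a, IsWeightedHomogeneous w (f a) (d a)) (hd : ∀ a, 0 < d a) {N : σ →₀ ℕ}
    (hN : ∀ i, X i ^ N i ∈ Ideal.span (Set.range f)) (c : ι → R) (s : σ →₀ ℕ) :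
    monomial s 1 ∈ Submodule.span R ((fun t => monomial t (1 : R)) '' Set.Iic N) ⊔
      (Ideal.span (Set.range fun a => f a - C (c a))).restrictScalars R := by
  set W := Submodule.span R ((fun t => monomial t (1 : R)) '' Set.Iic N) ⊔
    (Ideal.span (Set.range fun a => f a - C (c a))).restrictScalars R
  -- `X^s = X^t * X_i^(N i) = X^t * ∑ g_a f_a ≡ ∑ c_a X^t g_a`, and `X^t g_a` has smaller weight.
  induction hn : (Finsupp.weight w s).toNat using Nat.strong_induction_on generalizing s with
  | _ n ih =>
  by_cases hsN : s ≤ N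
  · exact Submodule.mem_sup_left (Submodule.subset_span ⟨s, hsN, rfl⟩)
  obtain ⟨i, hi⟩ : ∃ i, N i < s i := by simpa [Finsupp.le_def] using hsN
  set t := s - Finsupp.single i (N i)
  have hs : s = t + Finsupp.single i (N i) :=
    (tsub_add_cancel_of_le (Finsupp.single_le_iff.mpr hi.le)).symm
  obtain ⟨g, hg, hgf⟩ :=
    exists_isWeightedHomogeneous_of_mem_span hf ((isWeightedHomogeneous_X R w i).pow _) (hN i)
  have hlower : ∀ a, monomial t 1 * g a ∈ W := fun a =>
    ((isWeightedHomogeneous_monomial _ _ _ rfl).mul (hg a)).mem_of_monomial_mem fun u hu => by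
      refine ih _ ?_ u rfl
      have := Finsupp.weight_nonneg hw u
      have := hd a
      rw [hs, map_add, Finsupp.weight_single] at hn
      omega
  have hdecomp : monomial s (1 : R) =
      ∑ a, monomial t 1 * g a * (f a - C (c a)) + ∑ a, c a • (monomial t 1 * g a) := by
    rw [hs, monomial_add_single, hgf, Finset.mul_sum,
      ← Finset.sum_add_distrib]
    refine Finset.sum_congr rfl fun a _ => ?_
    rw [smul_eq_C_mul]
    ring
  rw [hdecomp]
  refine add_mem (Submodule.mem_sup_right (Submodule.sum_mem _ fun a _ => ?_))
    (Submodule.sum_mem _ fun a _ => W.smul_mem _ (hlower a))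
  exact Ideal.mul_mem_left _ _ (Ideal.subset_span ⟨a, rfl⟩)

theorem finite_quotient_span_sub_C_of_pow_X_mem_span (hw : ∀ i, 0 ≤ w i)
    (hf : ∀ a, IsWeightedHomogeneous w (f a) (d a)) (hd : ∀ a, 0 < d a) {N : σ →₀ ℕ}
    (hN : ∀ i, X i ^ N i ∈ Ideal.span (Set.range f)) (c : ι → R) :
    Module.Finite R (MvPolynomial σ R ⧸ Ideal.span (Set.range fun a => f a - C (c a))) := by
  classical
  set J := Ideal.span (Set.range fun a => f a - C (c a))
  set S := Submodule.span R ((fun t => monomial t (1 : R)) '' Set.Iic N)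
  have : Module.Finite R S := Module.Finite.span_of_finite R ((Set.finite_Iic N).image _)
  refine Module.Finite.of_surjective ((Ideal.Quotient.mkₐ R J).toLinearMap ∘ₗ S.subtype) ?_
  have hsup : S ⊔ J.restrictScalars R = ⊤ := by
    rw [eq_top_iff, ← (basisMonomials σ R).span_eq, Submodule.span_le, coe_basisMonomials]
    rintro _ ⟨s, rfl⟩
    exact monomial_mem_span_monomial_Iic_sup_span_sub_C hw hf hd hN c s
  intro y
  obtain ⟨p, rfl⟩ := Ideal.Quotient.mk_surjective y
  obtain ⟨q, hq, j, hj, rfl⟩ := Submodule.mem_sup.mp (hsup ▸ Submodule.mem_top : p ∈ S ⊔ _)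
  refine ⟨⟨q, hq⟩, ?_⟩
  simp [Ideal.Quotient.eq_zero_iff_mem.mpr hj]

end FiniteQuotient

section ZeroLocus

variable {K σ : Type*} [Field K]

theorem exists_pow_X_mem_of_zeroLocus_subset_zero [IsAlgClosed K] [Finite σ]
    {I : Ideal (MvPolynomial σ K)} (h : zeroLocus K I ⊆ {0}) :
    ∃ N : σ →₀ ℕ, ∀ i, X i ^ N i ∈ I := by
  have hrad : ∀ i, X i ∈ I.radical := fun i => by
    rw [← vanishingIdeal_zeroLocus_eq_radical (K := K)]
    intro x hx
    simp [Set.mem_singleton_iff.mp (h hx)]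
  choose N hN using hrad
  exact ⟨Finsupp.equivFunOnFinite.symm N, by simpa using hN⟩

theorem zeroLocus_finite_of_finite_quotient (I : Ideal (MvPolynomial σ K))
    [Module.Finite K (MvPolynomial σ K ⧸ I)] : (zeroLocus K I).Finite := by
  let φ : zeroLocus K I → (MvPolynomial σ K ⧸ I →ₐ[K] K) := fun x =>
    Ideal.Quotient.liftₐ I (aeval x.1) (mem_zeroLocus_iff.mp x.2)
  have hφ : φ.Injective := by
    intro x y hxy
    ext i
    simpa [φ] using congr($hxy (Ideal.Quotient.mk I (X i)))
  exact Set.finite_coe_iff.mp (Finite.of_injective φ hφ)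

end ZeroLocus

end MvPolynomial

theorem Matrix.isWeightedHomogeneous_det {n R σ M : Type*} [Fintype n] [DecidableEq n]
    [CommRing R] [AddCommMonoid M] {w : σ → M} {A : Matrix n n (MvPolynomial σ R)} {e e' : n → M}
    (hA : ∀ i j, IsWeightedHomogeneous w (A i j) (e i + e' j)) :
    IsWeightedHomogeneous w A.det (∑ i, e i + ∑ j, e' j) := by
  rw [Matrix.det_apply]
  refine IsWeightedHomogeneous.sum _ _ _ fun τ _ => ?_
  have hprod := IsWeightedHomogeneous.prod _ _ _ fun i (_ : i ∈ Finset.univ) => hA (τ i) i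
  rw [Finset.sum_add_distrib, Equiv.sum_comp τ e] at hprod
  rw [Units.smul_def]
  exact zsmul_mem ((mem_weightedHomogeneousSubmodule R w _ _).mpr hprod) _

def hWeight (k : ℕ) (i : Fin k) : ℤ := i + 1

theorem hsymC_isWeightedHomogeneous (k : ℕ) (n : ℤ) :
    IsWeightedHomogeneous (hWeight k) (hsymC k n) n := by
  unfold hsymC
  split_ifs with hn hn0
  · convert isWeightedHomogeneous_X ℂ (hWeight k) _
    simp only [hWeight]
    omega
  · exact hn0 ▸ isWeightedHomogeneous_one ℂ _
  · exact isWeightedHomogeneous_zero ℂ _ _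

theorem sRC_isWeightedHomogeneous (k : ℕ) (a : Fin k) :
    IsWeightedHomogeneous (hWeight k) (sRC k a) ((a + 1) * (k - a)) := by
  have hdeg : ∑ i : Fin (a + 1), ((k : ℤ) - a - i) + ∑ j : Fin (a + 1), (j : ℤ) =
      (a + 1) * (k - a) := by
    simp only [Finset.sum_sub_distrib, Finset.sum_const, Finset.card_univ, Fintype.card_fin,
      Int.nsmul_eq_mul, Nat.cast_add, Nat.cast_one, sub_add_cancel]
    ring
  exact hdeg ▸ Matrix.isWeightedHomogeneous_det fun i j => hsymC_isWeightedHomogeneous k _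

theorem eval_sRC_eq_pow {k : ℕ} (x : Fin k → ℂ) (a : Fin k)
    (hx : ∀ i : Fin k, k - 1 - a < (i : ℕ) → x i = 0) :
    eval x (sRC k a) = x ⟨k - 1 - a, by omega⟩ ^ (a.val + 1) := by
  rw [sRC, RingHom.map_det, RingHom.mapMatrix_apply, Matrix.det_of_isLowerTriangular]
  · rw [← Fin.prod_const]
    refine Finset.prod_congr rfl fun i _ => ?_
    have hdiag : ((k : ℤ) - a - i + i) = (k - 1 - a : ℕ) + 1 := by omega
    simp only [Matrix.map_apply, Matrix.of_apply, hsymC, hdiag]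
    rw [dif_pos (by omega), eval_X]
    congr
    omega
  · intro i j hij
    have hij : (i : ℕ) < j := OrderDual.toDual_lt_toDual.mp hij
    simp only [Matrix.map_apply, Matrix.of_apply, hsymC]
    split_ifs with hn hn0
    · exact (eval_X _).trans (hx _ (by simp only [Int.pred_toNat]; omega))
    · omega
    · exact map_zero _

theorem zeroLocus_span_range_sRC_subset_zero (k : ℕ) :
    zeroLocus ℂ (Ideal.span (Set.range (sRC k))) ⊆ {0} := by
  intro x hx
  by_contra hx0
  obtain ⟨i, hi⟩ := Function.ne_iff.mp hx0
  obtain ⟨j, hj, hmax⟩ :=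
    Finset.exists_max_image (Finset.univ.filter fun i => x i ≠ 0) id ⟨i, by simpa using hi⟩
  rw [Finset.mem_filter] at hj
  have hzero : ∀ i : Fin k, k - 1 - (k - 1 - j) < (i : ℕ) → x i = 0 := fun i hi => by
    by_contra h
    have := hmax i (Finset.mem_filter.mpr ⟨Finset.mem_univ i, h⟩)
    simp only [id, Fin.le_def] at this
    omega
  have hj' : (⟨k - 1 - (k - 1 - j), by omega⟩ : Fin k) = j := Fin.ext (by simp only; omega)
  have hsRC := mem_zeroLocus_iff.mp hx _ (Ideal.subset_span ⟨⟨k - 1 - j, by omega⟩, rfl⟩)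
  rw [aeval_eq_eval, eval_sRC_eq_pow x _ hzero] at hsRC
  simp only [hj'] at hsRC
  exact hj.2 (pow_eq_zero_iff (Nat.succ_ne_zero _) |>.mp hsRC)

theorem rectangle_variety_finite_general (k : ℕ) (r : Fin k → ℝ) :
    {x : Fin k → ℂ | ∀ a : Fin k, MvPolynomial.eval x (sRC k a) = (r a : ℂ)}.Finite := by
  obtain ⟨N, hN⟩ :=
    exists_pow_X_mem_of_zeroLocus_subset_zero (zeroLocus_span_range_sRC_subset_zero k)
  have : Module.Finite ℂ
      (MvPolynomial (Fin k) ℂ ⧸ Ideal.span (Set.range fun a => sRC k a - C (r a : ℂ))) :=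
    finite_quotient_span_sub_C_of_pow_X_mem_span (fun i => by simp only [hWeight]; omega)
      (sRC_isWeightedHomogeneous k) (fun a => mul_pos (by omega) (by omega)) hN _
  convert zeroLocus_finite_of_finite_quotient
    (Ideal.span (Set.range fun a => sRC k a - C (r a : ℂ))) using 1
  ext x
  simp [zeroLocus_span, sub_eq_zero, aeval_eq_eval]

/-- for any `r_1,…,r_k ≥ 0`, the affine algebraic variety
`𝓡 ⊂ ℂ^k` cut out by the equations `J_{R_a}(h_1,…,h_k) = r_a`, `a = 1,…,k`,
is finite. -/
theorem rectangle_variety_finite (k : ℕ) (r : Fin k → ℝ) (hr : ∀ a, 0 ≤ r a) :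
    {x : Fin k → ℂ | ∀ a : Fin k, MvPolynomial.eval x (sRC k a) = (r a : ℂ)}.Finite :=
  rectangle_variety_finite_general k r
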